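/- arXiv:1504.01300 — 5 statements merged into one kernel-verified Lean document; each statement's English description precedes it below -/
import Mathlib

section
/- Let F : M → N be an exact functor between finite abelian categories over a field k, and assume that in N every projective object is injective and every injective object is projective. Then the following are equivalent: (i) every object Y of N is a subobject of F(X) for some X; (ii) every object Y of N is a quotient of F(X) for some X; (iii) every object Y of N is a subquotient of F(X) for some X. -/
open CategoryTheory CategoryTheory.Limits

universe v u v' u'

/-- Let `F : M ⥤ N` be an exact functor between finite abelian `k`-linear categories,
and assume that in `N` projectives and injectives coincide. Then the following are
equivalent: (i) every `Y` is a subobject of some `F(X)`; (ii) every `Y` is a quotient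
of some `F(X)`; (iii) every `Y` is a subquotient of some `F(X)`. -/
theorem surjectivity_conditions_equiv
    {k : Type*} [Field k]
    {M : Type u} [Category.{v} M] [Abelian M] [Linear k M]
    {N : Type u'} [Category.{v'} N] [Abelian N] [Linear k N]
    [EnoughInjectives N] [EnoughProjectives N]
    (hPI : ∀ Z : N, Projective Z ↔ Injective Z)
    (F : M ⥤ N) [PreservesFiniteLimits F] [PreservesFiniteColimits F] :
    List.TFAE
      [ ∀ Y : N, ∃ (X : M) (f : Y ⟶ F.obj X), Mono f,
        ∀ Y : N, ∃ (X : M) (g : F.obj X ⟶ Y), Epi g,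
        ∀ Y : N, ∃ (X : M) (S : N) (i : S ⟶ F.obj X) (p : S ⟶ Y), Mono i ∧ Epi p ] := by
  tfae_have 1 → 3 := by
    intro h Y
    obtain ⟨X, f, hf⟩ := h Y
    exact ⟨X, Y, f, 𝟙 Y, hf, inferInstance⟩
  tfae_have 2 → 3 := by
    intro h Y
    obtain ⟨X, g, hg⟩ := h Y
    exact ⟨X, F.obj X, 𝟙 _, g, inferInstance, hg⟩
  tfae_have 3 → 1 := by
    intro h Y
    let I := Injective.under Y
    obtain ⟨X, S, i, p, hi, hp⟩ := h I
    haveI : Projective I := (hPI I).mpr inferInstance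
    have hs : Projective.factorThru (𝟙 I) p ≫ p = 𝟙 I := Projective.factorThru_comp _ _
    haveI : Mono (Projective.factorThru (𝟙 I) p) := mono_of_mono_fac hs
    exact ⟨X, Injective.ι Y ≫ Projective.factorThru (𝟙 I) p ≫ i, mono_comp _ _⟩
  tfae_have 3 → 2 := by
    intro h Y
    let P := Projective.over Y
    obtain ⟨X, S, i, p, hi, hp⟩ := h P
    haveI : Injective P := (hPI P).mp inferInstance
    have hs : i ≫ Injective.factorThru p i = p := Injective.comp_factorThru _ _
    haveI : Epi (Injective.factorThru p i) := epi_of_epi_fac hs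
    exact ⟨X, Injective.factorThru p i ≫ Projective.π Y, epi_comp _ _⟩
  tfae_finish
end

section
/- Let A be a finite tensor category, Z a simple object of A, X a nonzero object of A, and Y a simple object of A that occurs as a composition factor of Z ⊗ X*. Then Hom(P(Y) ⊗ X, Z) ≠ 0, where P(Y) is the projective cover of Y; consequently the projective cover P(Z) of Z is a direct summand of P(Y) ⊗ X. -/
open CategoryTheory CategoryTheory.Limits CategoryTheory.MonoidalCategory

universe v u

/-- `π : P ⟶ Y` is a projective cover: `P` is projective, `π` is epi, and `π` is an
essential epimorphism. -/
def IsProjectiveCover {A : Type u} [Category.{v} A] {P Y : A} (π : P ⟶ Y) : Prop :=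
  Projective P ∧ Epi π ∧ ∀ ⦃T : A⦄ (g : T ⟶ P), Epi (g ≫ π) → Epi g

/-- Let `A` be a finite tensor category, `Z` a simple object, `X` a nonzero object, and
`Y` a simple object occurring as a composition factor of `Z ⊗ Xᘁ`. Then
`Hom(P(Y) ⊗ X, Z) ≠ 0`, and consequently `P(Z)` is a direct summand of `P(Y) ⊗ X`. -/
theorem projective_cover_summand_of_composition_factor
    {k : Type*} [Field k] [IsAlgClosed k]
    {A : Type u} [Category.{v} A] [Abelian A] [Linear k A]
    [MonoidalCategory A] [RigidCategory A]
    (Z Y X : A) [Simple Z] [Simple Y] (hX : ¬ IsZero X)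
    -- `Y` is a composition factor (a simple subquotient) of `Z ⊗ Xᘁ`:
    (hfactor : ∃ (S : A) (i : S ⟶ Z ⊗ Xᘁ) (p : S ⟶ Y), Mono i ∧ Epi p)
    (PY PZ : A) (πY : PY ⟶ Y) (πZ : PZ ⟶ Z)
    (hPY : IsProjectiveCover πY) (hPZ : IsProjectiveCover πZ) :
    (∃ f : PY ⊗ X ⟶ Z, f ≠ 0) ∧ ∃ T : A, Nonempty (PY ⊗ X ≅ PZ ⊞ T) := by
  obtain ⟨S, i, p, hi, hp⟩ := hfactor
  obtain ⟨hPYproj, hπYepi, -⟩ := hPY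
  obtain ⟨hPZproj, hπZepi, hPZess⟩ := hPZ
  -- lift `πY` through the epi `p` using projectivity of `PY`
  haveI := hPYproj
  haveI := hp
  let g : PY ⟶ S := Projective.factorThru πY p
  have hg : g ≫ p = πY := Projective.factorThru_comp πY p
  have hgne : g ≠ 0 := by
    intro h
    have hπY0 : πY = 0 := by rw [← hg, h, zero_comp]
    haveI := hπYepi
    have hid : 𝟙 Y = 0 := by
      rw [← cancel_epi πY, hπY0]; simp
    exact CategoryTheory.id_nonzero Y hid
  have hgi : g ≫ i ≠ 0 := fun h => hgne (zero_of_comp_mono i h)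
  -- transpose along the rigid adjunction
  haveI : (tensorRight Xᘁ).IsLeftAdjoint := ⟨_, ⟨tensorRightAdjunction Xᘁ Xᘁᘁ⟩⟩
  have hw0 : (0 : PY ⊗ X ⟶ Z) ▷ Xᘁ = 0 := by
    simpa using (tensorRight Xᘁ).map_zero (PY ⊗ X) Z
  let f : PY ⊗ X ⟶ Z := (tensorRightHomEquiv PY X Xᘁ Z).symm (g ≫ i)
  have hf : f ≠ 0 := by
    intro h
    apply hgi
    have heq : (tensorRightHomEquiv PY X Xᘁ Z) f = g ≫ i :=
      (tensorRightHomEquiv PY X Xᘁ Z).apply_symm_apply _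
    rw [h] at heq
    rw [← heq]
    simp [tensorRightHomEquiv, hw0]
  refine ⟨⟨f, hf⟩, ?_⟩
  -- `f` is an epimorphism since `Z` is simple
  haveI hfepi : Epi f := epi_of_nonzero_to_simple hf
  -- `tensorRight Xᘁ` preserves epimorphisms (it is a left adjoint)
  haveI : PreservesColimits (tensorRight Xᘁ) :=
    (tensorRightAdjunction Xᘁ Xᘁᘁ).leftAdjoint_preservesColimits
  haveI : Epi ((tensorRight Xᘁ).map πZ) := inferInstance
  haveI hepi' : Epi (πZ ▷ Xᘁ) := by simpa using this
  -- lift `g ≫ i` through `πZ ▷ Xᘁ`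
  let l : PY ⟶ PZ ⊗ Xᘁ := Projective.factorThru (g ≫ i) (πZ ▷ Xᘁ)
  have hl : l ≫ πZ ▷ Xᘁ = g ≫ i := Projective.factorThru_comp _ _
  let h : PY ⊗ X ⟶ PZ := (tensorRightHomEquiv PY X Xᘁ PZ).symm l
  have hhf : h ≫ πZ = f := by
    have := tensorRightHomEquiv_naturality (Y' := Xᘁ)
      ((tensorRightHomEquiv PY X Xᘁ PZ).symm l) πZ
    rw [Equiv.apply_symm_apply] at this
    have h2 : (tensorRightHomEquiv PY X Xᘁ Z) (h ≫ πZ) = g ≫ i := by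
      rw [this, hl]
    have := congrArg (tensorRightHomEquiv PY X Xᘁ Z).symm h2
    rwa [Equiv.symm_apply_apply] at this
  haveI : Epi (h ≫ πZ) := by rw [hhf]; exact hfepi
  haveI hhepi : Epi h := hPZess h this
  -- split the epi `h` using projectivity of `PZ`
  haveI := hPZproj
  let s : PZ ⟶ PY ⊗ X := Projective.factorThru (𝟙 PZ) h
  have hs : s ≫ h = 𝟙 PZ := Projective.factorThru_comp _ _
  haveI : IsSplitMono s := IsSplitMono.mk' ⟨h, hs⟩
  refine ⟨cokernel s, ⟨?_⟩⟩
  exact biprod.uniqueUpToIso _ _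
    (isBilimitBinaryBiconeOfIsSplitMonoOfCokernel (cokernelIsCokernel s))
end

section
/- Let A be a finite tensor category, M an exact A-module category realized as M = mod-A for an algebra A ∈ A. Then there exists λ > 0 such that FPdim_A(M) = λ·FPdim_M(M) for all objects M of M, where FPdim_A(M) is the Frobenius-Perron dimension of the underlying object of M in A and FPdim_M is the normalized Frobenius-Perron dimension on M. -/
/-- Let `M = mod-A` be an exact module category over a finite tensor category `A`.
On `V = Gr(M) ⊗ ℝ` (basis `m j` the simple classes, with the `Gr(A) ⊗ ℝ`-action `ρ`,
nonnegative and irreducible action constants), both `FPdim_A` (the Frobenius–Perron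
dimension of the underlying object of `A`) and the normalized `FPdim_M` are positive
linear characters `f, g` satisfying `f(X ⊗ M) = FPdim(X)·f(M)`.  Then there exists
`λ > 0` with `FPdim_A(M) = λ · FPdim_M(M)` for all `M`. -/
theorem fpdim_characters_proportional
    {ι ι' : Type*} [Fintype ι] [Fintype ι'] [Nonempty ι']
    {R : Type*} [Ring R] [Algebra ℝ R]
    {V : Type*} [AddCommGroup V] [Module ℝ V]
    (b : Module.Basis ι ℝ R) (FPdim : R →ₐ[ℝ] ℝ) (hpos : ∀ i, 0 < FPdim (b i))
    (m : Module.Basis ι' ℝ V)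
    (ρ : R →ₐ[ℝ] Module.End ℝ V)
    (hnn : ∀ i j k, 0 ≤ m.repr (ρ (b i) (m j)) k)
    -- irreducibility (indecomposability of `M`):
    (hirr : ∀ j k, ∃ i, 0 < m.repr (ρ (b i) (m j)) k)
    (f g : V →ₗ[ℝ] ℝ)                       -- `FPdim_A` and `FPdim_M`
    (hf : ∀ (x : R) (v : V), f (ρ x v) = FPdim x * f v)
    (hg : ∀ (x : R) (v : V), g (ρ x v) = FPdim x * g v)
    (hfpos : ∀ j, 0 < f (m j)) (hgpos : ∀ j, 0 < g (m j)) :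
    ∃ lam : ℝ, 0 < lam ∧ ∀ v : V, f v = lam * g v := by
 
  obtain ⟨j₀, -, hj₀⟩ := Finset.exists_min_image Finset.univ
    (fun j => f (m j) / g (m j)) ⟨Classical.arbitrary ι', Finset.mem_univ _⟩
  set lam := f (m j₀) / g (m j₀) with hlam
  have hlampos : 0 < lam := div_pos (hfpos j₀) (hgpos j₀)
  have hnn' : ∀ j, 0 ≤ f (m j) - lam * g (m j) := by
    intro j
    have h1 := hj₀ j (Finset.mem_univ j)
    rw [hlam, div_le_div_iff₀ (hgpos j₀) (hgpos j)] at h1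
    have hgj := hgpos j
    have hgj0 := hgpos j₀
    rw [hlam]
    rw [div_mul_eq_mul_div, sub_nonneg, div_le_iff₀ hgj0]
    nlinarith
  have hzero : f (m j₀) - lam * g (m j₀) = 0 := by
    rw [hlam, div_mul_cancel₀ _ (hgpos j₀).ne', sub_self]
  set h : V →ₗ[ℝ] ℝ := f - lam • g with hh
  have hhval : ∀ v, h v = f v - lam * g v := by
    intro v; simp [hh]
  have hexp : ∀ v : V, h v = ∑ k, m.repr v k * h (m k) := by
    intro v
    conv_lhs => rw [← m.sum_repr v]
    simp only [map_sum, map_smul, smul_eq_mul]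
  have hkey : ∀ j, h (m j) = 0 := by
    intro j
    obtain ⟨i, hi⟩ := hirr j₀ j
    have heq : h (ρ (b i) (m j₀)) = 0 := by
      have e1 : h (ρ (b i) (m j₀)) = FPdim (b i) * h (m j₀) := by
        rw [hhval, hhval, hf, hg]; ring
      rw [e1, hhval, hzero, mul_zero]
    rw [hexp] at heq
    have hterm : ∀ k ∈ Finset.univ, (0:ℝ) ≤ m.repr (ρ (b i) (m j₀)) k * h (m k) := by
      intro k _
      exact mul_nonneg (hnn i j₀ k) (by rw [hhval]; exact hnn' k)
    have hk := (Finset.sum_eq_zero_iff_of_nonneg hterm).mp heq j (Finset.mem_univ j)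
    rcases mul_eq_zero.mp hk with h1 | h2
    · exact absurd h1 hi.ne'
    · exact h2
  refine ⟨lam, hlampos, fun v => ?_⟩
  have hv : h v = 0 := by
    rw [hexp]
    exact Finset.sum_eq_zero fun k _ => by rw [hkey k, mul_zero]
  rw [hhval] at hv; linarith
end

section
/- Let A be a finite tensor category, M an indecomposable exact A-module category with M = mod-A for an algebra A in A, and let Y be an A-bimodule in A. Then the ratio α = FPdim_A(Y)/FPdim_A(A) is an algebraic integer and satisfies α ≥ 1. -/
/-- Let `A` be a finite tensor category, `M = mod-A` an indecomposable exact `A`-module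
category, and `Y` an `A`-bimodule in `A`, i.e. an object of the dual finite tensor
category `(A*_M)^op`.  Let `Gr` be the Grothendieck ring of `(A*_M)^op` (a ring, free
of finite rank over `ℤ`, with basis the simple classes, on which the Frobenius–Perron
dimension is a ring homomorphism to `ℝ` taking values `≥ 1` on simples), and let `y`
be the (nonzero, nonnegative) class of `Y`.  Given the relation
`FPdim_A(Y) = FPdim_A(A) · FPdim_{(A*_M)^op}(Y)`, the ratio
`α = FPdim_A(Y)/FPdim_A(A)` is an algebraic integer and `α ≥ 1`. -/
theorem bimodule_dimension_ratio_algebraic_integer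
    {ι : Type*} [Fintype ι]
    {Gr : Type*} [Ring Gr]
    (bz : Module.Basis ι ℤ Gr)                     -- simple classes of `(A*_M)^op`
    (FPdim : Gr →+* ℝ)
    (hge1 : ∀ i, 1 ≤ FPdim (bz i))
    (y : Gr)                                -- the class of the bimodule `Y`
    (hy : ∀ i, 0 ≤ bz.repr y i) (hyne : y ≠ 0)
    (fY fA : ℝ)                             -- `FPdim_A(Y)` and `FPdim_A(A)`
    (hfA : 0 < fA)
    (hrel : fY = fA * FPdim y) :            -- `FPdim_A(Y) = FPdim_A(A)·FPdim(Y)`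
    IsIntegral ℤ (fY / fA) ∧ 1 ≤ fY / fA := by
  have hdiv : fY / fA = FPdim y := by
    rw [hrel, mul_div_cancel_left₀ _ hfA.ne']
  rw [hdiv]
  constructor
  · have : Module.Finite ℤ Gr := Module.Finite.of_basis bz
    exact (IsIntegral.of_finite ℤ y).map FPdim.toIntAlgHom
  · have hsum : FPdim y = ∑ i, (bz.repr y i : ℝ) * FPdim (bz i) := by
      conv_lhs => rw [← bz.sum_repr y]
      rw [map_sum]
      simp [zsmul_eq_mul]
    obtain ⟨j, hj⟩ : ∃ j, bz.repr y j ≠ 0 := by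
      by_contra h
      push_neg at h
      exact hyne (by
        have := bz.sum_repr y
        simp [h] at this
        exact this.symm)
    have hj1 : (1 : ℤ) ≤ bz.repr y j := lt_of_le_of_ne (hy j) (Ne.symm hj)
    have hterm : (1 : ℝ) ≤ (bz.repr y j : ℝ) * FPdim (bz j) := by
      have h1 : (1 : ℝ) ≤ (bz.repr y j : ℝ) := by exact_mod_cast hj1
      nlinarith [hge1 j]
    rw [hsum]
    calc (1:ℝ) ≤ (bz.repr y j : ℝ) * FPdim (bz j) := hterm
      _ ≤ ∑ i, (bz.repr y i : ℝ) * FPdim (bz i) := by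
          apply Finset.single_le_sum (f := fun i => (bz.repr y i : ℝ) * FPdim (bz i))
            (fun i _ => ?_) (Finset.mem_univ j)
          have h0 : (0:ℝ) ≤ (bz.repr y i : ℝ) := by exact_mod_cast hy i
          exact mul_nonneg h0 (le_trans zero_le_one (hge1 i))
end

section
/- Let A ↪ B → C ⊠ End(M) be an exact sequence of finite tensor categories with respect to an indecomposable exact A-module category M, with A and C fusion (semisimple) categories and M semisimple. Then B is a fusion category. -/
open CategoryTheory CategoryTheory.Limits CategoryTheory.MonoidalCategory ZeroObject

universe v u v₂ u₂ v₃ u₃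

section AuxSplit

variable {C : Type*} [Category C]

/-- An epimorphism onto a projective object splits. -/
lemma aux_section_of_epi {X Z : C} (e : X ⟶ Z) [Epi e] (hZ : Projective Z) :
    ∃ s : Z ⟶ X, s ≫ e = 𝟙 Z := by
  haveI := hZ
  exact ⟨Projective.factorThru (𝟙 Z) e, by simp⟩

/-- In an abelian category, a monomorphism with projective cokernel splits. -/
lemma aux_retraction_of_mono [Abelian C] {X Y : C} (m : X ⟶ Y) [Mono m]
    (hQ : Projective (cokernel m)) : ∃ r : Y ⟶ X, m ≫ r = 𝟙 X := by
  obtain ⟨s, hs⟩ := aux_section_of_epi (cokernel.π m) hQ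
  have hw : (𝟙 Y - cokernel.π m ≫ s) ≫ cokernel.π m = 0 := by
    have h1 : (cokernel.π m ≫ s) ≫ cokernel.π m = cokernel.π m := by
      rw [Category.assoc, hs, Category.comp_id]
    simp [Preadditive.sub_comp, h1]
  refine ⟨Abelian.monoLift m (𝟙 Y - cokernel.π m ≫ s) hw, ?_⟩
  have h2 := Abelian.monoLift_comp m (𝟙 Y - cokernel.π m ≫ s) hw
  have h3 : (m ≫ Abelian.monoLift m (𝟙 Y - cokernel.π m ≫ s) hw) ≫ m = 𝟙 X ≫ m := by
    rw [Category.assoc, h2]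
    simp [Preadditive.comp_sub, cokernel.condition_assoc]
  exact (cancel_mono m).1 h3

/-- Any morphism out of a zero object is a monomorphism. -/
lemma aux_mono_of_isZero_src {X Y : C} (hX : IsZero X) (f : X ⟶ Y) : Mono f :=
  ⟨fun g h _ => hX.eq_of_tgt g h⟩

end AuxSplit

/-- Let `A →ι B →F C ⊠ End(M)` be an exact sequence of finite tensor categories with
respect to an indecomposable exact `A`-module category `M` (`ι` fully faithful
monoidal, `F` surjective, `A = Ker(F)`, `F` normal).  Here `D` plays the role of
`C ⊠ End(M)` with distinguished subcategory `E = End(M)`.  If `A` and `C` are fusion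
categories and `M` is semisimple — semisimplicity of a finite tensor/abelian category
meaning that every object is projective; note `C ⊠ End(M)` is then semisimple — then
`B` is a fusion category, i.e. every object of `B` is projective. -/
theorem middle_term_semisimple
    {k : Type*} [Field k] [IsAlgClosed k]
    {A : Type u} [Category.{v} A] [Abelian A] [Linear k A]
    [MonoidalCategory A] [RigidCategory A]
    {B : Type u₂} [Category.{v₂} B] [Abelian B] [Linear k B]
    [MonoidalCategory B] [RigidCategory B]
    (ι : A ⥤ B) [ι.Monoidal] [ι.Full] [ι.Faithful]
    {D : Type u₃} [Category.{v₃} D] [Abelian D] [Linear k D] [MonoidalCategory D]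
    (E : D → Prop)                      -- the subcategory `End(M)` of `D = C ⊠ End(M)`
    (hEsub : ∀ {S Z : D} (f : S ⟶ Z), Mono f → E Z → E S)
    (hEquot : ∀ {Z Q : D} (f : Z ⟶ Q), Epi f → E Z → E Q)
    (hEiso : ∀ {Z Z' : D}, (Z ≅ Z') → E Z → E Z')
    (F : B ⥤ D) [F.Monoidal] [PreservesFiniteLimits F] [PreservesFiniteColimits F]
    -- `F` is surjective (dominant):
    (hsurj : ∀ Y : D, ∃ (X : B) (S : D) (i : S ⟶ F.obj X) (p : S ⟶ Y), Mono i ∧ Epi p)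
    -- `A = Ker(F)`:
    (hker : ∀ X : B, E (F.obj X) ↔ ι.essImage X)
    -- `F` is normal:
    (hnormal : ∀ X : B, ∃ (X₀ : B) (i₀ : X₀ ⟶ X), Mono i₀ ∧ E (F.obj X₀) ∧
      ∀ (S : D) (j : S ⟶ F.obj X), Mono j → E S →
        ∃ u : S ⟶ F.obj X₀, u ≫ F.map i₀ = j)
    -- `A` is a fusion category (semisimple):
    (hAss : ∀ Xa : A, Projective Xa)
    -- `C` and `M` are semisimple, hence so is `D = C ⊠ End(M)`:
    (hDss : ∀ Z : D, Projective Z) :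
    ∀ X : B, Projective X := by
  -- the unit of `B` lies in the kernel of `F`
  have hE1 : E (F.obj (𝟙_ B)) :=
    (hker _).2 ⟨𝟙_ A, ⟨(Functor.Monoidal.εIso ι).symm⟩⟩
  -- epimorphisms between kernel objects split
  have keyEpi : ∀ {V W : B} (f : V ⟶ W), Epi f → E (F.obj V) → E (F.obj W) →
      ∃ t : W ⟶ V, t ≫ f = 𝟙 W := by
    intro V W f hf hV hW
    obtain ⟨Va, ⟨eV⟩⟩ := (hker V).1 hV
    obtain ⟨Wa, ⟨eW⟩⟩ := (hker W).1 hW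
    haveI := hf
    have hfa : ι.map (ι.preimage (eV.hom ≫ f ≫ eW.inv)) = eV.hom ≫ f ≫ eW.inv :=
      ι.map_preimage _
    set fa : Va ⟶ Wa := ι.preimage (eV.hom ≫ f ≫ eW.inv) with hfa_def
    haveI hEpi : Epi fa := by
      apply ι.epi_of_epi_map
      rw [hfa]
      haveI : Epi (f ≫ eW.inv) := epi_comp _ _
      exact epi_comp _ _
    haveI := hAss Wa
    obtain ⟨ta, hta⟩ : ∃ ta : Wa ⟶ Va, ta ≫ fa = 𝟙 Wa :=
      ⟨Projective.factorThru (𝟙 Wa) fa, by simp⟩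
    refine ⟨eW.inv ≫ ι.map ta ≫ eV.hom, ?_⟩
    have h1 : eV.hom ≫ f = ι.map fa ≫ eW.hom := by
      rw [hfa]; simp
    calc (eW.inv ≫ ι.map ta ≫ eV.hom) ≫ f
        = eW.inv ≫ ι.map ta ≫ (eV.hom ≫ f) := by simp [Category.assoc]
      _ = eW.inv ≫ (ι.map ta ≫ ι.map fa) ≫ eW.hom := by rw [h1]; simp [Category.assoc]
      _ = 𝟙 W := by rw [← ι.map_comp, hta, ι.map_id]; simp
  -- monomorphisms between kernel objects split
  have keyMono : ∀ {V W : B} (f : V ⟶ W), Mono f → E (F.obj V) → E (F.obj W) →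
      ∃ r : W ⟶ V, f ≫ r = 𝟙 V := by
    intro V W f hf hV hW
    obtain ⟨Va, ⟨eV⟩⟩ := (hker V).1 hV
    obtain ⟨Wa, ⟨eW⟩⟩ := (hker W).1 hW
    haveI := hf
    have hfa : ι.map (ι.preimage (eV.hom ≫ f ≫ eW.inv)) = eV.hom ≫ f ≫ eW.inv :=
      ι.map_preimage _
    set fa : Va ⟶ Wa := ι.preimage (eV.hom ≫ f ≫ eW.inv) with hfa_def
    haveI hMono : Mono fa := by
      apply ι.mono_of_mono_map
      rw [hfa]
      haveI : Mono (f ≫ eW.inv) := mono_comp _ _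
      exact mono_comp _ _
    obtain ⟨ra, hra⟩ := aux_retraction_of_mono fa (hAss _)
    refine ⟨eW.inv ≫ ι.map ra ≫ eV.hom, ?_⟩
    have h1 : f ≫ eW.inv = eV.inv ≫ ι.map fa := by
      rw [hfa]; simp
    calc f ≫ eW.inv ≫ ι.map ra ≫ eV.hom
        = (f ≫ eW.inv) ≫ ι.map ra ≫ eV.hom := by simp [Category.assoc]
      _ = eV.inv ≫ (ι.map fa ≫ ι.map ra) ≫ eV.hom := by rw [h1]; simp [Category.assoc]
      _ = 𝟙 V := by rw [← ι.map_comp, hra, ι.map_id]; simp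
  -- every epimorphism onto the unit of `B` splits
  have hsec : ∀ {Y : B} (p : Y ⟶ 𝟙_ B), Epi p → ∃ τ : 𝟙_ B ⟶ Y, τ ≫ p = 𝟙 (𝟙_ B) := by
    intro Y p hp
    haveI := hp
    haveI := hDss (F.obj (𝟙_ B))
    -- split `F.map p` in the semisimple category `D`
    have hs : Projective.factorThru (𝟙 (F.obj (𝟙_ B))) (F.map p) ≫ F.map p
        = 𝟙 (F.obj (𝟙_ B)) := by simp
    set s : F.obj (𝟙_ B) ⟶ F.obj Y :=
      Projective.factorThru (𝟙 (F.obj (𝟙_ B))) (F.map p) with hs_def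
    haveI hsm : Mono s := by
      haveI : IsSplitMono s := IsSplitMono.mk' ⟨F.map p, hs⟩
      infer_instance
    -- normality
    obtain ⟨Y₀, i₀, hi₀, hEY₀, hfac⟩ := hnormal Y
    haveI := hi₀
    obtain ⟨u, hu⟩ := hfac (F.obj (𝟙_ B)) s hsm hE1
    set g : Y₀ ⟶ 𝟙_ B := i₀ ≫ p with hg_def
    have hug : u ≫ F.map g = 𝟙 (F.obj (𝟙_ B)) := by
      rw [hg_def, F.map_comp, ← Category.assoc, hu, hs]
    -- image factorization of `g`
    set I := Abelian.image g with hI_def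
    set e' : Y₀ ⟶ I := Abelian.factorThruImage g with he'_def
    set m' : I ⟶ 𝟙_ B := Abelian.image.ι g with hm'_def
    have hem : e' ≫ m' = g := Abelian.image.fac g
    have hEI : E (F.obj I) := hEsub (F.map m') inferInstance hE1
    -- split `m'` and `e'` inside the kernel
    obtain ⟨r', hr'⟩ := keyMono m' inferInstance hEI hE1
    obtain ⟨t', ht'⟩ := keyEpi e' inferInstance hEY₀ hEI
    -- a partial section over the image part
    set χ : I ⟶ Y := t' ≫ i₀ with hχ_def
    have hχ : χ ≫ p = m' := by
      rw [hχ_def, Category.assoc, ← hg_def, ← hem, ← Category.assoc, ht', Category.id_comp]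
    -- the complementary idempotent of the unit
    set ε₂ : 𝟙_ B ⟶ 𝟙_ B := 𝟙 (𝟙_ B) - r' ≫ m' with hε₂_def
    have hm'ε₂ : m' ≫ ε₂ = 0 := by
      rw [hε₂_def, Preadditive.comp_sub, Category.comp_id, ← Category.assoc, hr',
        Category.id_comp, sub_self]
    -- the ghost quotient `Q`
    set Q := cokernel m' with hQ_def
    set π : 𝟙_ B ⟶ Q := cokernel.π m' with hπ_def
    set jq : Q ⟶ 𝟙_ B := cokernel.desc m' ε₂ hm'ε₂ with hjq_def
    have hπjq : π ≫ jq = ε₂ := cokernel.π_desc _ _ _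
    have hε₂π : ε₂ ≫ π = π := by
      rw [hε₂_def, Preadditive.sub_comp, Category.id_comp, Category.assoc,
        cokernel.condition, comp_zero, sub_zero]
    have hjqπ : jq ≫ π = 𝟙 Q := by
      rw [← cancel_epi π, Category.comp_id, ← Category.assoc, hπjq, hε₂π]
    -- `F` kills `Q`
    haveI hFm'epi : Epi (F.map m') := by
      have h5 : (u ≫ F.map e') ≫ F.map m' = 𝟙 (F.obj (𝟙_ B)) := by
        rw [Category.assoc, ← F.map_comp, hem, hug]
      haveI : IsSplitEpi (F.map m') := IsSplitEpi.mk' ⟨u ≫ F.map e', h5⟩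
      infer_instance
    have hFQ : IsZero (F.obj Q) := by
      have hz : IsZero (cokernel (F.map m')) := by
        rw [IsZero.iff_id_eq_zero, ← cancel_epi (cokernel.π (F.map m'))]
        simp [cokernel.π_of_epi]
      exact hz.of_iso (PreservesCokernel.iso F m')
    have hEQ : E (F.obj Q) :=
      hEsub (0 : F.obj Q ⟶ F.obj (𝟙_ B)) (aux_mono_of_isZero_src hFQ _) hE1
    -- pull `p` back along `jq`
    set Pb := pullback p jq with hPb_def
    set sd : Pb ⟶ Q := pullback.snd p jq with hsd_def
    haveI hsdepi : Epi sd := by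
      rw [hsd_def]; infer_instance
    -- `Q ⊗ Pb` is again killed by `F`
    have hzB : IsZero ((0 : B) ⊗ Pb) := by
      haveI : (tensorRight Pb).IsLeftAdjoint :=
        (tensorRightAdjunction Pb (Pbᘁ)).isLeftAdjoint
      exact (tensorRight Pb).map_isZero (isZero_zero B)
    have hFQP : IsZero (F.obj (Q ⊗ Pb)) := by
      have i1 : F.obj (Q ⊗ Pb) ≅ F.obj ((0 : B) ⊗ Pb) :=
        (Functor.Monoidal.μIso F Q Pb).symm ≪≫
          tensorIso (hFQ.iso (F.map_isZero (isZero_zero B))) (Iso.refl (F.obj Pb)) ≪≫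
          Functor.Monoidal.μIso F (0 : B) Pb
      exact (F.map_isZero hzB).of_iso i1
    have hEQP : E (F.obj (Q ⊗ Pb)) :=
      hEsub (0 : F.obj (Q ⊗ Pb) ⟶ F.obj (𝟙_ B)) (aux_mono_of_isZero_src hFQP _) hE1
    -- the multiplication isomorphism `Q ⊗ Q ≅ Q`
    set φ : Q ⊗ Q ⟶ Q := (jq ▷ Q) ≫ (λ_ Q).hom with hφ_def
    set ψφ : Q ⟶ Q ⊗ Q := (λ_ Q).inv ≫ (π ▷ Q) with hψφ_def
    have hφ1 : φ ≫ ψφ = 𝟙 (Q ⊗ Q) := by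
      rw [hφ_def, hψφ_def, Category.assoc, Iso.hom_inv_id_assoc, ← comp_whiskerRight,
        hjqπ, id_whiskerRight]
    have keyU : (λ_ (𝟙_ B)).inv ≫ (ε₂ ▷ (𝟙_ B)) ≫ (λ_ (𝟙_ B)).hom = ε₂ := by
      rw [MonoidalCategory.whiskerRight_id, ← unitors_equal, ← unitors_inv_equal]
      simp
    have hφ2 : ψφ ≫ φ = 𝟙 Q := by
      rw [← cancel_epi π, Category.comp_id, hψφ_def, hφ_def]
      calc π ≫ ((λ_ Q).inv ≫ (π ▷ Q)) ≫ ((jq ▷ Q) ≫ (λ_ Q).hom)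
          = π ≫ (λ_ Q).inv ≫ ((π ≫ jq) ▷ Q) ≫ (λ_ Q).hom := by
            rw [comp_whiskerRight]; simp [Category.assoc]
        _ = π ≫ (λ_ Q).inv ≫ (ε₂ ▷ Q) ≫ (λ_ Q).hom := by rw [hπjq]
        _ = (λ_ (𝟙_ B)).inv ≫ (𝟙_ B ◁ π) ≫ (ε₂ ▷ Q) ≫ (λ_ Q).hom := by
            rw [← Category.assoc, leftUnitor_inv_naturality, Category.assoc]
        _ = (λ_ (𝟙_ B)).inv ≫ (ε₂ ▷ (𝟙_ B)) ≫ (𝟙_ B ◁ π) ≫ (λ_ Q).hom := by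
            rw [← Category.assoc ((𝟙_ B) ◁ π), whisker_exchange, Category.assoc]
        _ = (λ_ (𝟙_ B)).inv ≫ (ε₂ ▷ (𝟙_ B)) ≫ (λ_ (𝟙_ B)).hom ≫ π := by
            rw [leftUnitor_naturality]
        _ = ((λ_ (𝟙_ B)).inv ≫ (ε₂ ▷ (𝟙_ B)) ≫ (λ_ (𝟙_ B)).hom) ≫ π := by
            simp [Category.assoc]
        _ = ε₂ ≫ π := by rw [keyU]
        _ = π := hε₂π
    -- tensoring the pullback projection with `Q` yields an epi between kernel objects
    haveI hQsd : Epi (Q ◁ sd) := by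
      haveI := (tensorLeftAdjunction (ᘁQ) Q).leftAdjoint_preservesColimits
      haveI : (tensorLeft Q).PreservesEpimorphisms := inferInstance
      exact (tensorLeft Q).map_epi sd
    set Φ : Q ⊗ Pb ⟶ Q := (Q ◁ sd) ≫ φ with hΦ_def
    haveI hφepi : Epi φ := by
      haveI : IsSplitEpi φ := IsSplitEpi.mk' ⟨ψφ, hφ2⟩
      infer_instance
    haveI hΦepi : Epi Φ := by rw [hΦ_def]; exact epi_comp _ _
    obtain ⟨shat, hshat⟩ := keyEpi Φ hΦepi hEQP hEQ
    -- a section of the pullback projection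
    set ψ' : Q ⟶ Pb := shat ≫ (jq ▷ Pb) ≫ (λ_ Pb).hom with hψ'_def
    have hψ'sd : ψ' ≫ sd = 𝟙 Q := by
      rw [hψ'_def]
      calc (shat ≫ (jq ▷ Pb) ≫ (λ_ Pb).hom) ≫ sd
          = shat ≫ (jq ▷ Pb) ≫ (λ_ Pb).hom ≫ sd := by simp [Category.assoc]
        _ = shat ≫ (jq ▷ Pb) ≫ (𝟙_ B ◁ sd) ≫ (λ_ Q).hom := by
            rw [leftUnitor_naturality]
        _ = shat ≫ (Q ◁ sd) ≫ (jq ▷ Q) ≫ (λ_ Q).hom := by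
            rw [← whisker_exchange_assoc]
        _ = shat ≫ Φ := by rw [hΦ_def, hφ_def]
        _ = 𝟙 Q := hshat
    -- the lift of `jq` through `p`
    set ψ : Q ⟶ Y := ψ' ≫ pullback.fst p jq with hψ_def
    have hψ : ψ ≫ p = jq := by
      rw [hψ_def, Category.assoc, pullback.condition, ← Category.assoc, ← hsd_def,
        hψ'sd, Category.id_comp]
    -- assemble the full section of p
    refine ⟨r' ≫ χ + π ≫ ψ, ?_⟩
    simp only [Preadditive.add_comp, Category.assoc]
    rw [hχ, hψ, hπjq, hε₂_def]
    abel
  -- hence the unit is projective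
  have hunit : Projective (𝟙_ B) := by
    constructor
    intro Et Xt f e he
    haveI := he
    obtain ⟨τ, hτ⟩ := hsec (pullback.snd e f) inferInstance
    refine ⟨τ ≫ pullback.fst e f, ?_⟩
    rw [Category.assoc, pullback.condition, ← Category.assoc, hτ, Category.id_comp]
  -- and therefore every object is projective, by rigidity
  intro X
  haveI := (tensorLeftAdjunction (ᘁ(ᘁX)) (ᘁX)).leftAdjoint_preservesColimits
  haveI : (tensorLeft (ᘁX)).PreservesEpimorphisms := inferInstance
  have h2 := (tensorLeftAdjunction (ᘁX) X).map_projective (𝟙_ B) hunit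
  exact Projective.of_iso (ρ_ X) h2
end
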